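/- arXiv:2303.01969 — 2 statements merged into one kernel-verified Lean document; each statement's English description precedes it below -/
import Mathlib

section
/- Let G be a finitely generated group equipped with the word metric of a finite generating set, let P be a normal subgroup of G, and let Q = G/P be equipped with the quotient metric d_Q(gP, hP) = inf{d_G(a, b) : a ∈ gP, b ∈ hP}. Suppose that every finitely generated subgroup of P, equipped with the metric induced from G, has subexponential growth (i.e. there is a non-decreasing function g with (1/r)·log g(r) → 0 as r → ∞ such that every ball of radius r in the subgroup contains at most g(r) points). Then ov-asdim_se(G) ≤ asdim(Q). -/
open Metric Set

/-- A metric space is 1-uniformly discrete. -/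
def UnifDiscrete (X : Type*) [MetricSpace X] : Prop :=
  ∀ x y : X, x ≠ y → 1 ≤ dist x y

/-- Bounded geometry: balls of each radius have uniformly bounded cardinality. -/
def BddGeom (X : Type*) [MetricSpace X] : Prop :=
  ∀ R : ℝ, ∃ N : ℕ, ∀ (x : X) (s : Finset X), ↑s ⊆ Metric.closedBall x R → s.card ≤ N

/-- A regular map between metric spaces. -/
def IsRegularMap {X Y : Type*} [MetricSpace X] [MetricSpace Y] (f : X → Y) : Prop :=
  ∃ κ : ℕ, 1 ≤ κ ∧ (∀ x x' : X, dist (f x) (f x') ≤ κ * (1 + dist x x')) ∧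
    ∀ y : Y, ∃ c : Finset X, c.card ≤ κ ∧ f ⁻¹' Metric.ball y 1 ⊆ ⋃ x ∈ c, Metric.ball x 1

/-- A quasi-isometric embedding. -/
def IsQIEmbedding {X Y : Type*} [MetricSpace X] [MetricSpace Y] (f : X → Y) : Prop :=
  ∃ L D : ℝ, 1 ≤ L ∧ 0 ≤ D ∧ ∀ x x' : X,
    L⁻¹ * dist x x' - D ≤ dist (f x) (f x') ∧ dist (f x) (f x') ≤ L * dist x x' + D

/-- A coarse Lipschitz map. -/
def CoarseLipschitz {X Y : Type*} [MetricSpace X] [MetricSpace Y] (f : X → Y) : Prop :=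
  ∃ K : ℝ, 1 ≤ K ∧ ∀ x x' : X, dist (f x) (f x') ≤ K * dist x x' + K

/-- The metric of `T` is the graph metric of a 3-regular tree. -/
def IsCubicTreeMetric (T : Type*) [MetricSpace T] : Prop :=
  ∃ G : SimpleGraph T, G.Connected ∧ G.IsAcyclic ∧
    (∀ v : T, (G.neighborSet v).ncard = 3) ∧
    ∀ u v : T, dist u v = (G.dist u v : ℝ)

/-- The metric of `Z` is the graph metric of a connected graph of uniformly bounded degree. -/
def IsBddDegGraphMetric (Z : Type*) [MetricSpace Z] : Prop :=
  ∃ G : SimpleGraph Z, G.Connected ∧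
    (∃ D : ℕ, ∀ v : Z, (G.neighborSet v).ncard ≤ D) ∧
    ∀ u v : Z, dist u v = (G.dist u v : ℝ)

/-- A non-decreasing subexponential function `[0,∞) → [0,∞)`. -/
def SubexpFun (g : ℝ → ℝ) : Prop :=
  MonotoneOn g (Set.Ici 0) ∧ (∀ r : ℝ, 0 ≤ g r) ∧
    Filter.Tendsto (fun r => Real.log (g r) / r) Filter.atTop (nhds 0)

/-- Every ball of radius `r` in `Z` contains at most `g r` points. -/
def HasGrowthBound (Z : Type*) [MetricSpace Z] (g : ℝ → ℝ) : Prop :=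
  ∀ (z : Z) (r : ℝ), 0 ≤ r → ∀ s : Finset Z, ↑s ⊆ Metric.closedBall z r → (s.card : ℝ) ≤ g r

def HasSubexpGrowth (Z : Type*) [MetricSpace Z] : Prop :=
  ∃ g : ℝ → ℝ, SubexpFun g ∧ HasGrowthBound Z g

def HasPolyGrowth (Z : Type*) [MetricSpace Z] : Prop :=
  ∃ (C : ℝ) (d : ℕ), 1 ≤ C ∧ HasGrowthBound Z (fun r => C * r ^ d + C)

/-- Distinct members of the family are at distance at least `r` from each other. -/
def SepFamily {X : Type*} [MetricSpace X] (r : ℝ) (𝒰 : Set (Set X)) : Prop :=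
  ∀ U ∈ 𝒰, ∀ V ∈ 𝒰, U ≠ V → ∀ x ∈ U, ∀ y ∈ V, r ≤ dist x y

/-- A decomposition of `X` into `n+1` colours of `r`-separated pieces. -/
def Decomp {X : Type*} [MetricSpace X] (n : ℕ) (r : ℝ) (𝒰 : Fin (n+1) → Set (Set X)) : Prop :=
  (∀ x : X, ∃ i, ∃ U ∈ 𝒰 i, x ∈ U) ∧ ∀ i, SepFamily r (𝒰 i)

/-- A collection of subsets of `X` has growth uniformly controlled by the family `F`. -/
def FGrowing {X : Type*} [MetricSpace X] (F : Set (ℝ → ℝ)) (𝒰 : Set (Set X)) : Prop :=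
  ∃ f ∈ F, ∃ C : ℝ, 1 ≤ C ∧ ∀ U ∈ 𝒰, ∀ (x : X) (r : ℝ), 0 ≤ r →
    ∀ s : Finset X, ↑s ⊆ U ∩ Metric.closedBall x r → (s.card : ℝ) ≤ C * f (C * r) + C

/-- `asdim_F X ≤ n`. -/
def AsdimLE (F : Set (ℝ → ℝ)) (X : Type*) [MetricSpace X] (n : ℕ) : Prop :=
  ∀ r : ℝ, 0 < r → ∃ 𝒰 : Fin (n+1) → Set (Set X),
    Decomp n r 𝒰 ∧ FGrowing F (⋃ i, 𝒰 i)

/-- Iterated neighbourhoods `N^m_s(Y)` of `Y` with respect to the collection `𝒴`. -/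
def iterNbhd {X : Type*} [MetricSpace X] (𝒴 : Set (Set X)) (s : ℝ) : ℕ → Set X → Set X
  | 0, Y => Y
  | m + 1, Y => ⋃₀ {Y' | Y' ∈ 𝒴 ∧ ∃ x ∈ Y', ∃ z ∈ iterNbhd 𝒴 s m Y, dist x z ≤ s}

/-- `ov-asdim_F X ≤ n`. -/
def OvAsdimLE (F : Set (ℝ → ℝ)) (X : Type*) [MetricSpace X] (n : ℕ) : Prop :=
  ∀ r : ℝ, 0 < r → ∃ 𝒰 : Fin (n+1) → Set (Set X),
    Decomp n r 𝒰 ∧ ∀ s : ℝ, 1 ≤ s → ∀ m : ℕ,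
      FGrowing F ((iterNbhd (⋃ i, 𝒰 i) s m) '' (⋃ i, 𝒰 i))

/-- A family of non-decreasing functions `[0,∞) → [0,∞)`. -/
def NondecrFamily (F : Set (ℝ → ℝ)) : Prop :=
  ∀ f ∈ F, MonotoneOn f (Set.Ici 0) ∧ ∀ r : ℝ, 0 ≤ r → 0 ≤ f r

/-- The family of non-decreasing subexponential functions. -/
def seFamily : Set (ℝ → ℝ) := {g | SubexpFun g}

/-- The family of non-decreasing functions bounded by `C·r^d + C`. -/
def polyFamily (d : ℕ) : Set (ℝ → ℝ) :=
  {f | MonotoneOn f (Set.Ici 0) ∧ (∀ r : ℝ, 0 ≤ f r) ∧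
    ∃ C : ℝ, 0 < C ∧ ∀ r : ℝ, 0 ≤ r → f r ≤ C * r ^ d + C}

/-- `asdim X ≤ n` : classical asymptotic dimension. -/
def ClassicalAsdimLE (X : Type*) [MetricSpace X] (n : ℕ) : Prop :=
  ∀ r : ℝ, 0 < r → ∃ 𝒰 : Fin (n+1) → Set (Set X), Decomp n r 𝒰 ∧
    ∃ B : ℝ, ∀ U ∈ ⋃ i, 𝒰 i, ∀ x ∈ U, ∀ y ∈ U, dist x y ≤ B

/-- The metric of the group `G` is the word metric of the generating set `S`. -/
def IsWordDist (G : Type*) [Group G] [MetricSpace G] (S : Set G) : Prop :=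
  ∀ g h : G, dist g h =
    (sInf {n : ℕ | ∃ l : List G, l.length = n ∧ (∀ x ∈ l, x ∈ S ∨ x⁻¹ ∈ S) ∧
      g * l.prod = h} : ℕ)

/-!
Pull back an `r`-separated decomposition of `Q` with pieces of diameter `≤ B` along `π`, and cut
the preimage of each piece `V` into its `r`-chain components. Two points of one chain component
differ, up to words of length `≤ B + 1` on either side, by an element of `P` that is a product of
elements of `P` of length `≤ r + 2(B + 1)`; so each chain component lies within `B + 1` of a coset
`a·H` of the finitely generated subgroup `H ≤ P` they generate. Passing to an iterated
neighbourhood only enlarges the radius and the generating length by constants. Finally, a ball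
of radius `ρ` meets the `R`-neighbourhood of a coset `gH` in at most `|B_G(R)| · g_H(2ρ + 2R)`
points, where `g_H` is the subexponential growth function of `H`.
-/

open Pointwise

section WordMetric

variable {G : Type*} [Group G] [MetricSpace G]

theorem IsWordDist.dist_mul_left {S : Set G} (h : IsWordDist G S) (u g k : G) :
    dist (u * g) (u * k) = dist g k := by
  rw [h, h]
  simp only [mul_assoc, mul_right_inj]

theorem IsWordDist.isIsometricSMul {S : Set G} (h : IsWordDist G S) : IsIsometricSMul G G :=
  ⟨fun u => Isometry.of_dist_eq (h.dist_mul_left u)⟩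

theorem IsWordDist.exists_word {S : Set G} (h : IsWordDist G S) (g : G) :
    ∃ l : List G, (l.length : ℝ) = dist 1 g ∧ (∀ x ∈ l, x ∈ S ∨ x⁻¹ ∈ S) ∧ l.prod = g := by
  rcases eq_or_ne g 1 with rfl | hg
  · exact ⟨[], by simp, by simp, rfl⟩
  have hpos := dist_pos.2 hg.symm
  rw [h] at hpos ⊢
  obtain ⟨l, hlen, hlS, hprod⟩ := Nat.sInf_mem (Nat.nonempty_of_pos_sInf (by exact_mod_cast hpos))
  exact ⟨l, by rw [hlen], hlS, by simpa using hprod⟩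

theorem IsWordDist.finite_closedBall_one {S : Finset G} (h : IsWordDist G (S : Set G)) (R : ℝ) :
    (closedBall (1 : G) R).Finite := by
  classical
  set T : Finset G := insert 1 (S ∪ S⁻¹)
  refine (T ^ ⌈R⌉₊).finite_toSet.subset fun y hy => ?_
  obtain ⟨l, hlen, hlS, rfl⟩ := h.exists_word y
  rw [mem_closedBall, dist_comm, ← hlen] at hy
  have hlT : ∀ x ∈ l, x ∈ T := fun x hx => by
    simp only [T, Finset.mem_insert, Finset.mem_union, Finset.mem_inv']
    exact Or.inr (by exact_mod_cast hlS x hx)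
  refine Finset.pow_subset_pow_right (Finset.mem_insert_self 1 _)
    (by exact_mod_cast hy.trans (Nat.le_ceil R)) (Finset.mem_pow.2 ?_)
  exact ⟨fun i => ⟨l.get i, hlT _ (List.get_mem l i)⟩, congrArg List.prod (List.ofFn_get l)⟩

end WordMetric

section LeftInvariant

variable {G : Type*} [Group G] [MetricSpace G] [IsIsometricSMul G G]

theorem dist_one_inv_mul (g k : G) : dist 1 (g⁻¹ * k) = dist g k := by
  rw [← dist_mul_left g, mul_one, mul_inv_cancel_left]

theorem dist_one_inv (g : G) : dist 1 g⁻¹ = dist 1 g := by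
  rw [← dist_mul_left g, mul_one, mul_inv_cancel, dist_comm]

theorem dist_one_mul_le (g k : G) : dist 1 (g * k) ≤ dist 1 g + dist 1 k := by
  calc dist 1 (g * k) ≤ dist 1 g + dist g (g * k) := dist_triangle _ _ _
    _ = dist 1 g + dist 1 k := by rw [← dist_mul_left g 1 k, mul_one]

end LeftInvariant

section ShortClosure

variable {G : Type*} [Group G] [MetricSpace G]

def shortClosure (P : Subgroup G) (A : ℝ) : Subgroup G :=
  Subgroup.closure {x | x ∈ P ∧ dist 1 x ≤ A}

theorem shortClosure_le (P : Subgroup G) (A : ℝ) : shortClosure P A ≤ P :=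
  (Subgroup.closure_le P).2 fun _ hx => hx.1

theorem shortClosure_mono (P : Subgroup G) {A A' : ℝ} (h : A ≤ A') :
    shortClosure P A ≤ shortClosure P A' :=
  Subgroup.closure_mono fun _ hx => ⟨hx.1, hx.2.trans h⟩

theorem shortClosure_fg (P : Subgroup G) {A : ℝ} (hA : (closedBall (1 : G) A).Finite) :
    (shortClosure P A).FG :=
  (Subgroup.fg_iff _).2 ⟨_, rfl, hA.subset fun x hx => by
    rw [mem_closedBall, dist_comm]; exact hx.2⟩

variable [IsIsometricSMul G G]

theorem mem_shortClosure_of_dist_le {P : Subgroup G} {A : ℝ} {h p : G}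
    (hh : h ∈ shortClosure P A) (hp : p ∈ P) (hhp : dist h p ≤ A) : p ∈ shortClosure P A := by
  have hstep : h⁻¹ * p ∈ shortClosure P A := Subgroup.subset_closure
    ⟨mul_mem (inv_mem (shortClosure_le P A hh)) hp, (dist_one_inv_mul h p).trans_le hhp⟩
  simpa using mul_mem hh hstep

theorem conj_mem_shortClosure {P : Subgroup G} [hP : P.Normal] {A : ℝ} {k : G}
    (hk : k ∈ shortClosure P A) (u : G) : u * k * u⁻¹ ∈ shortClosure P (A + 2 * dist 1 u) := by
  have hmap : u * k * u⁻¹ ∈ (shortClosure P A).map (MulAut.conj u).toMonoidHom :=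
    ⟨k, hk, rfl⟩
  rw [shortClosure, MonoidHom.map_closure] at hmap
  refine Subgroup.closure_mono ?_ hmap
  rintro _ ⟨x, ⟨hxP, hx⟩, rfl⟩
  refine ⟨hP.conj_mem x hxP u, ?_⟩
  calc dist 1 (u * x * u⁻¹) ≤ dist 1 u + dist 1 x + dist 1 u⁻¹ := by
        linarith [dist_one_mul_le (u * x) u⁻¹, dist_one_mul_le u x]
    _ ≤ A + 2 * dist 1 u := by rw [dist_one_inv]; linarith

end ShortClosure

section CosetNbhd

variable {G : Type*} [Group G] [MetricSpace G]

def cosetNbhd (g : G) (H : Subgroup G) (R : ℝ) : Set G :=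
  {z | ∃ h ∈ H, dist (g * h) z ≤ R}

variable [IsIsometricSMul G G]

/-- The cosets `g • H` and `g' • H₀` differ by a short word `u`, and `u H₀ u⁻¹` is generated by
short elements of the normal subgroup `P`. -/
theorem mem_cosetNbhd_of_dist_le {P : Subgroup G} [P.Normal] {g g' x y z : G}
    {A A₀ A' R R₀ s : ℝ} (hz : z ∈ cosetNbhd g (shortClosure P A) R)
    (hx : x ∈ cosetNbhd g' (shortClosure P A₀) R₀)
    (hy : y ∈ cosetNbhd g' (shortClosure P A₀) R₀) (hxz : dist x z ≤ s)
    (hA : A ≤ A') (hA₀ : A₀ + 2 * (R + s + R₀) ≤ A') :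
    y ∈ cosetNbhd g (shortClosure P A') (R + s + 2 * R₀) := by
  obtain ⟨h, hh, hhz⟩ := hz
  obtain ⟨k₁, hk₁, hk₁x⟩ := hx
  obtain ⟨k₂, hk₂, hk₂y⟩ := hy
  set u := (g * h)⁻¹ * (g' * k₁)
  have hu : dist 1 u ≤ R + s + R₀ := by
    rw [dist_one_inv_mul]
    linarith [dist_triangle4 (g * h) z x (g' * k₁), dist_comm x z, dist_comm x (g' * k₁)]
  have hconj := conj_mem_shortClosure (mul_mem (inv_mem hk₁) hk₂) u
  refine ⟨h * (u * (k₁⁻¹ * k₂) * u⁻¹), mul_mem (shortClosure_mono P hA hh)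
    (shortClosure_mono P (by linarith) hconj), ?_⟩
  have hcoset : g * (h * (u * (k₁⁻¹ * k₂) * u⁻¹)) = g' * k₂ * u⁻¹ := by simp only [u]; group
  calc dist (g * (h * (u * (k₁⁻¹ * k₂) * u⁻¹))) y
      ≤ dist (g' * k₂ * u⁻¹) (g' * k₂ * 1) + dist (g' * k₂) y := by
        rw [hcoset, mul_one]; exact dist_triangle _ _ _
    _ ≤ R + s + 2 * R₀ := by
        rw [dist_mul_left, dist_comm, dist_one_inv]; linarith

theorem exists_iterNbhd_subset_cosetNbhd {P : Subgroup G} [P.Normal] {𝒴 : Set (Set G)}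
    {A₀ R₀ s : ℝ} (h𝒴 : ∀ Y ∈ 𝒴, ∃ g, Y ⊆ cosetNbhd g (shortClosure P A₀) R₀)
    (hR₀ : 0 ≤ R₀) (hs : 0 ≤ s) (m : ℕ) :
    ∃ A R : ℝ, 0 ≤ R ∧ ∀ Y ∈ 𝒴, ∃ g, iterNbhd 𝒴 s m Y ⊆ cosetNbhd g (shortClosure P A) R := by
  induction m with
  | zero => exact ⟨A₀, R₀, hR₀, h𝒴⟩
  | succ m ih =>
    obtain ⟨A, R, hR, hiter⟩ := ih
    refine ⟨max A (A₀ + 2 * (R + s + R₀)), R + s + 2 * R₀, by positivity, fun Y hY => ?_⟩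
    obtain ⟨g, hg⟩ := hiter Y hY
    refine ⟨g, sUnion_subset ?_⟩
    rintro Y' ⟨hY', x, hx, z, hz, hxz⟩ y hy
    obtain ⟨g', hg'⟩ := h𝒴 Y' hY'
    exact mem_cosetNbhd_of_dist_le (hg hz) (hg' hx) (hg' hy) hxz (le_max_left _ _)
      (le_max_right _ _)

/-- Each `z` near `g • H` is `g * h z * w z` with `h z ∈ H` and `w z` in the `R`-ball; for `z` in a
`ρ`-ball the `h z` lie in a `(2ρ + 2R)`-ball of `H`. -/
theorem card_le_of_subset_cosetNbhd {H : Subgroup G} {gH : ℝ → ℝ} (hgH₀ : ∀ r, 0 ≤ gH r)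
    (hH : ∀ c : G, c ∈ H → ∀ r : ℝ, 0 ≤ r → ∀ t : Finset G,
      ↑t ⊆ {x : G | x ∈ H} ∩ closedBall c r → (t.card : ℝ) ≤ gH r)
    {R : ℝ} (hR : (closedBall (1 : G) R).Finite) {g x : G} {ρ : ℝ} {t : Finset G}
    (ht : ↑t ⊆ cosetNbhd g H R ∩ closedBall x ρ) :
    (t.card : ℝ) ≤ hR.toFinset.card * gH (2 * ρ + 2 * R) := by
  classical
  rcases t.eq_empty_or_nonempty with rfl | ⟨z₀, hz₀⟩
  · simpa using mul_nonneg (Nat.cast_nonneg _) (hgH₀ _)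
  choose! h hhH hhz using fun z (hz : z ∈ t) => (ht hz).1
  have hball : ∀ z ∈ t, dist z x ≤ ρ := fun z hz => (ht hz).2
  have hρR : 0 ≤ 2 * ρ + 2 * R := by
    linarith [dist_nonneg.trans (hball z₀ hz₀), dist_nonneg.trans (hhz z₀ hz₀)]
  have himage : ↑(t.image h) ⊆ {y : G | y ∈ H} ∩ closedBall (h z₀) (2 * ρ + 2 * R) := by
    intro _ hy
    obtain ⟨z, hz, rfl⟩ := Finset.mem_coe.1 hy |> Finset.mem_image.1
    refine ⟨hhH z hz, ?_⟩
    rw [mem_closedBall, ← dist_mul_left g]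
    linarith [dist_triangle4 (g * h z) z z₀ (g * h z₀), dist_triangle_right z z₀ x, hhz z hz,
      hhz z₀ hz₀, hball z hz, hball z₀ hz₀, dist_comm z₀ (g * h z₀)]
  have hcard : t.card ≤ (t.image h ×ˢ hR.toFinset).card := by
    refine Finset.card_le_card_of_injOn (fun z => (h z, (g * h z)⁻¹ * z)) (fun z hz => ?_) ?_
    · refine Finset.mem_product.2 ⟨Finset.mem_image_of_mem h hz, ?_⟩
      rw [Finite.mem_toFinset, mem_closedBall, dist_comm, dist_one_inv_mul]
      exact hhz z hz
    · intro z₁ _ z₂ _ heq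
      simp only [Prod.mk.injEq] at heq
      rw [heq.1] at heq
      exact mul_left_cancel heq.2
  rw [Finset.card_product] at hcard
  calc (t.card : ℝ) ≤ (t.image h).card * hR.toFinset.card := by exact_mod_cast hcard
    _ ≤ gH (2 * ρ + 2 * R) * hR.toFinset.card :=
        mul_le_mul_of_nonneg_right (hH _ (hhH z₀ hz₀) _ hρR _ himage) (Nat.cast_nonneg _)
    _ = hR.toFinset.card * gH (2 * ρ + 2 * R) := mul_comm _ _

end CosetNbhd

theorem SubexpFun.comp_mul_add {g : ℝ → ℝ} (hg : SubexpFun g) {a c : ℝ} (ha : 0 < a)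
    (hc : 0 ≤ c) : SubexpFun fun t => g (a * t + c) := by
  obtain ⟨hmono, hnonneg, hlim⟩ := hg
  refine ⟨fun t ht t' ht' htt' => hmono ?_ ?_ ?_, fun t => hnonneg _, ?_⟩
  · exact mem_Ici.2 (by nlinarith [mem_Ici.1 ht])
  · exact mem_Ici.2 (by nlinarith [mem_Ici.1 ht'])
  · nlinarith
  have haff : Filter.Tendsto (fun t : ℝ => a * t + c) Filter.atTop Filter.atTop :=
    Filter.tendsto_atTop_add_const_right _ _ (Filter.tendsto_id.const_mul_atTop ha)
  have hratio : Filter.Tendsto (fun t : ℝ => a + c / t) Filter.atTop (nhds (a + 0)) :=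
    tendsto_const_nhds.add (tendsto_const_nhds.div_atTop Filter.tendsto_id)
  have hprod := (hlim.comp haff).mul hratio
  rw [zero_mul] at hprod
  refine hprod.congr' ?_
  filter_upwards [Filter.eventually_gt_atTop 0] with t ht
  simp only [Function.comp_apply]
  field_simp

theorem fGrowing_seFamily_of_subset_cosetNbhd {G : Type*} [Group G] [MetricSpace G]
    [IsIsometricSMul G G] {H : Subgroup G} {gH : ℝ → ℝ} (hgH : SubexpFun gH)
    (hH : ∀ c : G, c ∈ H → ∀ r : ℝ, 0 ≤ r → ∀ t : Finset G,
      ↑t ⊆ {x : G | x ∈ H} ∩ closedBall c r → (t.card : ℝ) ≤ gH r)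
    {R : ℝ} (hR₀ : 0 ≤ R) (hR : (closedBall (1 : G) R).Finite) {𝒴 : Set (Set G)}
    (h𝒴 : ∀ Y ∈ 𝒴, ∃ g, Y ⊆ cosetNbhd g H R) : FGrowing seFamily 𝒴 := by
  set C : ℝ := max (hR.toFinset.card : ℝ) 1
  have hMC : (hR.toFinset.card : ℝ) ≤ C := le_max_left _ _
  have hC : 1 ≤ C := le_max_right _ _
  refine ⟨fun t => gH (2 * t + 2 * R), hgH.comp_mul_add two_pos (by positivity), C, hC, ?_⟩
  intro Y hY x ρ hρ t ht
  obtain ⟨g, hg⟩ := h𝒴 Y hY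
  have hcard := card_le_of_subset_cosetNbhd hgH.2.1 hH hR
    (ht.trans (inter_subset_inter_left _ hg))
  have hmono : gH (2 * ρ + 2 * R) ≤ gH (2 * (C * ρ) + 2 * R) :=
    hgH.1 (mem_Ici.2 (by positivity)) (mem_Ici.2 (by positivity)) (by nlinarith)
  calc (t.card : ℝ) ≤ hR.toFinset.card * gH (2 * ρ + 2 * R) := hcard
    _ ≤ C * gH (2 * (C * ρ) + 2 * R) :=
        mul_le_mul hMC hmono (hgH.2.1 _) (by positivity)
    _ ≤ C * gH (2 * (C * ρ) + 2 * R) + C := by linarith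

def IsQuotientDist {X Y : Type*} [MetricSpace X] [MetricSpace Y] (π : X → Y) : Prop :=
  ∀ q q' : Y, dist q q' = sInf {r : ℝ | ∃ a b : X, π a = q ∧ π b = q' ∧ dist a b = r}

section QuotientDist

variable {X Y : Type*} [MetricSpace X] [MetricSpace Y] {π : X → Y}

theorem IsQuotientDist.dist_le (hπ : IsQuotientDist π) (a b : X) :
    dist (π a) (π b) ≤ dist a b := by
  rw [hπ]
  refine csInf_le ⟨0, ?_⟩ ⟨a, b, rfl, rfl, rfl⟩
  rintro _ ⟨_, _, -, -, rfl⟩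
  exact dist_nonneg

theorem IsQuotientDist.exists_dist_lt (hπ : IsQuotientDist π) {a b : X} {c : ℝ}
    (h : dist (π a) (π b) < c) : ∃ a' b', π a' = π a ∧ π b' = π b ∧ dist a' b' < c := by
  rw [hπ] at h
  obtain ⟨_, ⟨a', b', ha', hb', rfl⟩, hlt⟩ := exists_lt_of_csInf_lt
    (by exact ⟨dist a b, a, b, rfl, rfl, rfl⟩) h
  exact ⟨a', b', ha', hb', hlt⟩

theorem IsQuotientDist.exists_mem_ker_dist_lt {G Q : Type*} [Group G] [MetricSpace G]
    [IsIsometricSMul G G] [Group Q] [MetricSpace Q] {π : G →* Q} (hπ : IsQuotientDist π)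
    {x y : G} {c : ℝ} (h : dist (π x) (π y) < c) : ∃ p ∈ π.ker, dist (x * p) y < c := by
  obtain ⟨a, b, ha, hb, hab⟩ := hπ.exists_dist_lt h
  refine ⟨x⁻¹ * y * b⁻¹ * a, by simp [ha, hb], ?_⟩
  calc dist (x * (x⁻¹ * y * b⁻¹ * a)) y = dist (y * b⁻¹ * a) (y * b⁻¹ * b) := by group
    _ < c := by rwa [dist_mul_left]

end QuotientDist

section Chains

variable {X : Type*} [MetricSpace X]

def chainRel (W : Set X) (r : ℝ) (x y : X) : Prop :=
  x ∈ W ∧ y ∈ W ∧ dist x y < r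

instance (W : Set X) (r : ℝ) : Std.Symm (chainRel W r) :=
  ⟨fun x y ⟨hx, hy, hxy⟩ => ⟨hy, hx, dist_comm x y ▸ hxy⟩⟩

def chainComponent (W : Set X) (r : ℝ) (a : X) : Set X :=
  {y | Relation.ReflTransGen (chainRel W r) a y}

theorem chainComponent_subset {W : Set X} {r : ℝ} {a : X} (ha : a ∈ W) :
    chainComponent W r a ⊆ W := by
  intro y hy
  induction hy with
  | refl => exact ha
  | tail _ hstep => exact hstep.2.1

theorem chainComponent_eq_of_dist_lt {W : Set X} {r : ℝ} {a b x y : X}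
    (hx : x ∈ chainComponent W r a) (hy : y ∈ chainComponent W r b) (hxW : x ∈ W) (hyW : y ∈ W)
    (hxy : dist x y < r) : chainComponent W r a = chainComponent W r b := by
  have hab : Relation.ReflTransGen (chainRel W r) a b :=
    (hx.tail ⟨hxW, hyW, hxy⟩).trans (symm hy)
  ext z
  exact ⟨(symm hab).trans, hab.trans⟩

def chainRefinement {Y : Type*} [MetricSpace Y] {n : ℕ} (π : X → Y) (r : ℝ)
    (𝒱 : Fin (n + 1) → Set (Set Y)) (i : Fin (n + 1)) : Set (Set X) :=
  {U | ∃ V ∈ 𝒱 i, ∃ a, π a ∈ V ∧ U = chainComponent (π ⁻¹' V) r a}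

theorem decomp_chainRefinement {Y : Type*} [MetricSpace Y] {n : ℕ} {r : ℝ}
    {𝒱 : Fin (n + 1) → Set (Set Y)} (h𝒱 : Decomp n r 𝒱) {π : X → Y}
    (hπ : ∀ a b, dist (π a) (π b) ≤ dist a b) : Decomp n r (chainRefinement π r 𝒱) := by
  refine ⟨fun x => ?_, ?_⟩
  · obtain ⟨i, V, hV, hxV⟩ := h𝒱.1 (π x)
    exact ⟨i, _, ⟨V, hV, x, hxV, rfl⟩, Relation.ReflTransGen.refl⟩
  rintro i _ ⟨V, hV, a, ha, rfl⟩ _ ⟨V', hV', a', ha', rfl⟩ hne x hx y hy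
  have hxV : x ∈ π ⁻¹' V := chainComponent_subset (W := π ⁻¹' V) ha hx
  have hyV' : y ∈ π ⁻¹' V' := chainComponent_subset (W := π ⁻¹' V') ha' hy
  by_contra! hxy
  by_cases hVV : V = V'
  · subst hVV
    exact hne (chainComponent_eq_of_dist_lt hx hy hxV hyV' hxy)
  · exact (h𝒱.2 i V hV V' hV' hVV _ hxV _ hyV').not_gt ((hπ x y).trans_lt hxy)

theorem chainComponent_subset_cosetNbhd {G Q : Type*} [Group G] [MetricSpace G]
    [IsIsometricSMul G G] [Group Q] [MetricSpace Q] {π : G →* Q} (hπ : IsQuotientDist π)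
    {V : Set Q} {B r : ℝ} (hV : ∀ q ∈ V, ∀ q' ∈ V, dist q q' ≤ B) {a : G} (ha : π a ∈ V) :
    chainComponent (π ⁻¹' V) r a ⊆ cosetNbhd a (shortClosure π.ker (r + 2 * (B + 1))) (B + 1) := by
  intro y hy
  induction hy with
  | refl =>
    have hB : 0 ≤ B := by simpa using hV _ ha _ ha
    exact ⟨1, one_mem _, by rw [mul_one, dist_self]; linarith⟩
  | @tail y y' _ hstep ih =>
    obtain ⟨h, hh, hhy⟩ := ih
    obtain ⟨-, hy'V, hyy'⟩ := hstep
    obtain ⟨p, hp, hpy'⟩ := hπ.exists_mem_ker_dist_lt ((hV _ ha _ hy'V).trans_lt (lt_add_one B))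
    refine ⟨p, mem_shortClosure_of_dist_le hh hp ?_, hpy'.le⟩
    rw [← dist_mul_left a]
    linarith [dist_triangle4 (a * h) y y' (a * p), dist_comm (a * p) y']

end Chains

theorem ov_asdim_se_le_asdim_quotient_general
    (G : Type*) [Group G] [MetricSpace G]
    (S : Finset G)
    (hGdist : IsWordDist G (S : Set G))
    (P : Subgroup G)
    (Q : Type*) [Group Q] [MetricSpace Q]
    (π : G →* Q) (hker : π.ker = P)
    (hQdist : ∀ q q' : Q,
      dist q q' = sInf {r : ℝ | ∃ a b : G, π a = q ∧ π b = q' ∧ dist a b = r})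
    (hsub : ∀ H : Subgroup G, H ≤ P → H.FG →
      ∃ g : ℝ → ℝ, SubexpFun g ∧ ∀ c : G, c ∈ H → ∀ r : ℝ, 0 ≤ r →
        ∀ t : Finset G, ↑t ⊆ {x : G | x ∈ H} ∩ Metric.closedBall c r →
          (t.card : ℝ) ≤ g r)
    (n : ℕ) (hQ : ClassicalAsdimLE Q n) :
    OvAsdimLE seFamily G n := by
  subst hker
  have := hGdist.isIsometricSMul
  have hπ : IsQuotientDist π := hQdist
  intro r hr
  obtain ⟨𝒱, h𝒱, B, hB⟩ := hQ r hr
  have hB₀ : 0 ≤ B := by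
    obtain ⟨i, V, hV, h1⟩ := h𝒱.1 1
    simpa using hB V (mem_iUnion.2 ⟨i, hV⟩) 1 h1 1 h1
  refine ⟨chainRefinement π r 𝒱, decomp_chainRefinement h𝒱 hπ.dist_le, fun s hs m => ?_⟩
  have hpieces : ∀ Y ∈ ⋃ i, chainRefinement π r 𝒱 i,
      ∃ g, Y ⊆ cosetNbhd g (shortClosure π.ker (r + 2 * (B + 1))) (B + 1) := by
    simp only [mem_iUnion]
    rintro _ ⟨i, V, hV, a, ha, rfl⟩
    exact ⟨a, chainComponent_subset_cosetNbhd hπ (hB V (mem_iUnion.2 ⟨i, hV⟩)) ha⟩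
  obtain ⟨A, R, hR, hiter⟩ := exists_iterNbhd_subset_cosetNbhd hpieces (by linarith) (by linarith) m
  obtain ⟨gH, hgH, hgrowth⟩ :=
    hsub _ (shortClosure_le _ A) (shortClosure_fg _ (hGdist.finite_closedBall_one A))
  refine fGrowing_seFamily_of_subset_cosetNbhd hgH hgrowth hR (hGdist.finite_closedBall_one R) ?_
  rintro _ ⟨Y, hY, rfl⟩
  exact hiter Y hY

/-- If `1 → P → G → Q → 1` is an extension of a finitely generated group
`G` such that every finitely generated subgroup of `P` has subexponential growth in the
induced metric, then `ov-asdim_se(G) ≤ asdim(Q)` (with `Q` carrying the quotient metric). -/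
theorem ov_asdim_se_le_asdim_quotient
    (G : Type*) [Group G] [MetricSpace G]
    (S : Finset G) (hgen : Subgroup.closure (S : Set G) = ⊤)
    (hGdist : IsWordDist G (S : Set G))
    (P : Subgroup G) (hPnormal : P.Normal)
    (Q : Type*) [Group Q] [MetricSpace Q]
    (π : G →* Q) (hsurj : Function.Surjective π) (hker : π.ker = P)
    (hQdist : ∀ q q' : Q,
      dist q q' = sInf {r : ℝ | ∃ a b : G, π a = q ∧ π b = q' ∧ dist a b = r})
    (hsub : ∀ H : Subgroup G, H ≤ P → H.FG →
      ∃ g : ℝ → ℝ, SubexpFun g ∧ ∀ c : G, c ∈ H → ∀ r : ℝ, 0 ≤ r →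
        ∀ t : Finset G, ↑t ⊆ {x : G | x ∈ H} ∩ Metric.closedBall c r →
          (t.card : ℝ) ≤ g r)
    (n : ℕ) (hQ : ClassicalAsdimLE Q n) :
    OvAsdimLE seFamily G n :=
  ov_asdim_se_le_asdim_quotient_general G S hGdist P Q π hker hQdist hsub n hQ
end

section
/- Let L be a finitely generated group of subexponential growth (i.e. with respect to the word metric of a finite generating set, there is a non-decreasing function g with (1/r)·log g(r) → 0 as r → ∞ such that every ball of radius r contains at most g(r) elements), and let Q be a finitely generated group of finite asymptotic dimension. Let L ≀ Q = (⊕_{q ∈ Q} L) ⋊ Q be the restricted wreath product, whose elements are pairs (φ, q) with φ : Q → L finitely supported and q ∈ Q, with multiplication (φ, q)(φ', q') = (φ · (q·φ'), q q') where (q·φ')(x) = φ'(q⁻¹x), equipped with the word metric of the finite generating set consisting of the generators of Q and the functions supported at the identity of Q taking a generator of L as value. Then asdim_se(L ≀ Q) ≤ asdim(Q). -/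
open Metric Set

/-!
Cover `Q` by `n + 1` families of `r`-separated sets of diameter `≤ B`. Over a set `V` of the
cover, split `L ≀ Q` according to the lamps far from `V`: a piece consists of the elements whose
position lies in `V` and whose lamps agree with a fixed `ψ` at every point at distance `≥ r`
from `V`. A word of length `< r` moves the position by less than `r` and changes only lamps at
distance `< r` from the starting position, so distinct pieces of one colour are `r`-apart. The
pieces are unbounded, but a piece meets a ball of radius `t` in at most `M · g(2t)^M` elements,
where `M` bounds the size of balls of radius `r + B` in `Q`; this is subexponential in `t`.
-/

namespace IsWordDist

variable {G : Type*} [Group G] [MetricSpace G] {S : Set G}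

/-- Since `sInf ∅ = 0` and `dist g h = 0` forces `g = h`, the set of lengths of words from `g`
to `h` is never empty. -/
lemma exists_list (hd : IsWordDist G S) (g h : G) :
    ∃ l : List G, (∀ x ∈ l, x ∈ S ∨ x⁻¹ ∈ S) ∧ g * l.prod = h ∧
      (l.length : ℝ) = dist g h := by
  have hN : {n : ℕ | ∃ l : List G, l.length = n ∧ (∀ x ∈ l, x ∈ S ∨ x⁻¹ ∈ S) ∧
      g * l.prod = h}.Nonempty := by
    by_cases hgh : g = h
    · exact ⟨0, Set.mem_ofPred.2 ⟨[], rfl, by simp, by simp [hgh]⟩⟩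
    · rw [Set.nonempty_iff_ne_empty]
      intro hN
      exact hgh (dist_eq_zero.mp (by rw [hd, hN, Nat.sInf_empty, Nat.cast_zero]))
  obtain ⟨l, hlen, hl, hp⟩ := Nat.sInf_mem hN
  exact ⟨l, hl, hp, by rw [hd, hlen]⟩

lemma dist_le_length (hd : IsWordDist G S) {g h : G} (l : List G)
    (hl : ∀ x ∈ l, x ∈ S ∨ x⁻¹ ∈ S) (hp : g * l.prod = h) : dist g h ≤ l.length := by
  rw [hd]
  exact Nat.cast_le.2 (Nat.sInf_le ⟨l, rfl, hl, hp⟩)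

lemma exists_finset_closedBall_subset {S : Finset G} (hd : IsWordDist G S) (x : G) (n : ℕ) :
    ∃ F : Finset G, closedBall x n ⊆ F ∧ F.card ≤ (2 * S.card + 1) ^ n := by
  classical
  set A := S ∪ S.image (·⁻¹) ∪ {1}
  refine ⟨(Fintype.piFinset fun _ : Fin n => A).image fun f => x * (List.ofFn f).prod, ?_, ?_⟩
  · have hword : ∀ l : List G, l.length = n → (∀ a ∈ l, a ∈ A) →
        x * l.prod ∈ (Fintype.piFinset fun _ : Fin n => A).image
          fun f => x * (List.ofFn f).prod := by
      rintro l rfl hA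
      exact Finset.mem_image.2 ⟨fun i => l[(i : ℕ)], Fintype.mem_piFinset.2 fun i => hA _ (by simp),
        by rw [List.ofFn_getElem]⟩
    intro z hz
    obtain ⟨l, hl, rfl, hlen⟩ := hd.exists_list x z
    have hln : l.length ≤ n := by
      have := mem_closedBall'.1 hz
      exact_mod_cast hlen ▸ this
    have := hword (l ++ List.replicate (n - l.length) 1) (by simp; omega) fun a ha => by
      rcases List.mem_append.1 ha with ha | ha
      · rcases hl a ha with h | h
        · simp [A, Finset.mem_coe.1 h]
        · simp only [A, Finset.mem_union, Finset.mem_image, Finset.mem_singleton]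
          exact Or.inl (Or.inr ⟨a⁻¹, h, inv_inv a⟩)
      · simp [A, List.eq_of_mem_replicate ha]
    simpa using this
  · calc _ ≤ (Fintype.piFinset fun _ : Fin n => A).card := Finset.card_image_le
      _ = A.card ^ n := by simp
      _ ≤ (2 * S.card + 1) ^ n := by
        gcongr
        have h1 : A.card ≤ (S ∪ S.image (·⁻¹)).card + 1 :=
          (Finset.card_union_le _ _).trans_eq (by rw [Finset.card_singleton])
        have h2 := Finset.card_union_le S (S.image (·⁻¹))
        have h3 := S.card_image_le (f := (·⁻¹))
        omega

end IsWordDist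

namespace SubexpFun

open Filter

variable {g : ℝ → ℝ}

lemma max_one (hg : SubexpFun g) : SubexpFun fun t => max 1 (g t) := by
  obtain ⟨hmono, hnn, hlim⟩ := hg
  refine ⟨fun a ha b hb hab => max_le_max le_rfl (hmono ha hb hab),
    fun t => zero_le_one.trans (le_max_left _ _), ?_⟩
  have hlog : ∀ t, Real.log (max 1 (g t)) = max 0 (Real.log (g t)) := by
    intro t
    rcases le_total 1 (g t) with h | h
    · rw [max_eq_right h, max_eq_right (Real.log_nonneg h)]
    · rw [max_eq_left h, max_eq_left (Real.log_nonpos (hnn t) h), Real.log_one]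
  have := (tendsto_const_nhds (x := (0 : ℝ))).max hlim
  rw [max_self] at this
  refine this.congr' ?_
  filter_upwards [eventually_gt_atTop 0] with t ht
  rw [hlog, ← max_div_div_right ht.le, zero_div]

lemma pow (hg : SubexpFun g) (M : ℕ) : SubexpFun fun t => g t ^ M := by
  obtain ⟨hmono, hnn, hlim⟩ := hg
  refine ⟨fun a ha b hb hab => pow_le_pow_left₀ (hnn a) (hmono ha hb hab) M,
    fun t => pow_nonneg (hnn t) M, ?_⟩
  have := hlim.const_mul (M : ℝ)
  rw [mul_zero] at this
  exact this.congr fun t => by rw [Real.log_pow, mul_div_assoc]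

end SubexpFun

section Wreath

variable {L Q W : Type*} [Group L] [Group Q] [Group W]

/-- `e` is a group isomorphism from `W` onto the restricted wreath product `L ≀ Q`. -/
def IsWreathEquiv (e : W ≃ {φ : Q → L // (Function.mulSupport φ).Finite} × Q) : Prop :=
  ∀ w w' : W,
    ((e (w * w')).1.1 = fun x : Q => (e w).1.1 x * (e w').1.1 ((e w).2⁻¹ * x)) ∧
    (e (w * w')).2 = (e w).2 * (e w').2

def wreathGens (SL : Set L) (SQ : Set Q)
    (e : W ≃ {φ : Q → L // (Function.mulSupport φ).Finite} × Q) : Set W :=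
  {w : W | ((∀ x : Q, (e w).1.1 x = 1) ∧ (e w).2 ∈ SQ) ∨
    ((e w).2 = 1 ∧ (e w).1.1 1 ∈ SL ∧ ∀ x : Q, x ≠ 1 → (e w).1.1 x = 1)}

namespace IsWreathEquiv

variable {e : W ≃ {φ : Q → L // (Function.mulSupport φ).Finite} × Q} (he : IsWreathEquiv e)
include he

lemma snd_mul (w w' : W) : (e (w * w')).2 = (e w).2 * (e w').2 := (he w w').2

lemma fst_mul (w w' : W) (y : Q) :
    (e (w * w')).1.1 y = (e w).1.1 y * (e w').1.1 ((e w).2⁻¹ * y) :=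
  congrFun (he w w').1 y

lemma snd_one : (e (1 : W)).2 = 1 := by
  simpa using he.snd_mul 1 1

lemma fst_one (y : Q) : (e (1 : W)).1.1 y = 1 := by
  simpa [he.snd_one] using he.fst_mul 1 1 y

lemma snd_inv (w : W) : (e w⁻¹).2 = (e w).2⁻¹ :=
  eq_inv_of_mul_eq_one_right (by rw [← he.snd_mul, mul_inv_cancel, he.snd_one])

lemma fst_inv (w : W) (y : Q) : (e w⁻¹).1.1 y = ((e w).1.1 ((e w).2 * y))⁻¹ := by
  refine (inv_eq_of_mul_eq_one_right ?_).symm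
  simpa [he.fst_one] using (he.fst_mul w w⁻¹ ((e w).2 * y)).symm

variable {SL : Set L} {SQ : Set Q}

lemma letter_shape {σ : W} (hσ : σ ∈ wreathGens SL SQ e ∨ σ⁻¹ ∈ wreathGens SL SQ e) :
    ((e σ).2 = 1 ∨ (e σ).2 ∈ SQ ∨ (e σ).2⁻¹ ∈ SQ) ∧
    ((e σ).1.1 1 = 1 ∨ (e σ).1.1 1 ∈ SL ∨ ((e σ).1.1 1)⁻¹ ∈ SL) ∧
    ∀ x : Q, x ≠ 1 → (e σ).1.1 x = 1 := by
  have hsnd : (e σ).2 = ((e σ⁻¹).2)⁻¹ := by rw [he.snd_inv, inv_inv]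
  have hfst : ∀ x, (e σ).1.1 x = ((e σ⁻¹).1.1 ((e σ⁻¹).2 * x))⁻¹ := by
    intro x; rw [← he.fst_inv, inv_inv]
  rcases hσ with (⟨h1, h2⟩ | ⟨h1, h2, h3⟩) | (⟨h1, h2⟩ | ⟨h1, h2, h3⟩)
  · exact ⟨Or.inr (Or.inl h2), Or.inl (h1 1), fun x _ => h1 x⟩
  · exact ⟨Or.inl h1, Or.inr (Or.inl h2), h3⟩
  · refine ⟨Or.inr (Or.inr (by rwa [hsnd, inv_inv])), Or.inl ?_, fun x _ => ?_⟩ <;>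
      rw [hfst, h1, inv_one]
  · refine ⟨Or.inl (by rw [hsnd, h1, inv_one]), Or.inr (Or.inr ?_), fun x hx => ?_⟩
    · rwa [hfst, h1, one_mul, inv_inv]
    · rw [hfst, h1, one_mul, h3 x hx, inv_one]

lemma fst_mul_letter_of_ne (w : W) {σ : W}
    (hσ : σ ∈ wreathGens SL SQ e ∨ σ⁻¹ ∈ wreathGens SL SQ e) {y : Q} (hy : y ≠ (e w).2) :
    (e (w * σ)).1.1 y = (e w).1.1 y := by
  rw [he.fst_mul, (he.letter_shape hσ).2.2 _ fun h => hy (inv_mul_eq_one.1 h).symm, mul_one]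

lemma exists_fst_mul_letter (w : W) {σ : W}
    (hσ : σ ∈ wreathGens SL SQ e ∨ σ⁻¹ ∈ wreathGens SL SQ e) (y : Q) :
    ∃ a : L, (a = 1 ∨ a ∈ SL ∨ a⁻¹ ∈ SL) ∧ (e (w * σ)).1.1 y = (e w).1.1 y * a := by
  refine ⟨_, ?_, he.fst_mul w σ y⟩
  obtain ⟨-, h1, hne⟩ := he.letter_shape hσ
  by_cases hy : (e w).2⁻¹ * y = 1
  · rwa [hy]
  · exact Or.inl (hne _ hy)

lemma exists_fst_mul_prod {l : List W}
    (hl : ∀ σ ∈ l, σ ∈ wreathGens SL SQ e ∨ σ⁻¹ ∈ wreathGens SL SQ e) (w : W) (y : Q) :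
    ∃ m : List L, m.length ≤ l.length ∧ (∀ a ∈ m, a ∈ SL ∨ a⁻¹ ∈ SL) ∧
      (e (w * l.prod)).1.1 y = (e w).1.1 y * m.prod := by
  induction l generalizing w with
  | nil => exact ⟨[], le_rfl, by simp, by simp⟩
  | cons σ l ih =>
    obtain ⟨a, ha, hwa⟩ := he.exists_fst_mul_letter w (hl σ List.mem_cons_self) y
    obtain ⟨m, hm, hmS, hwm⟩ := ih (fun τ hτ => hl τ (List.mem_cons_of_mem σ hτ)) (w * σ)
    rw [List.prod_cons, ← mul_assoc, hwm, hwa, mul_assoc]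
    rcases ha with rfl | ha
    · exact ⟨m, hm.trans (Nat.le_succ _), hmS, by rw [one_mul]⟩
    · exact ⟨a :: m, Nat.succ_le_succ hm, List.forall_mem_cons.2 ⟨ha, hmS⟩,
        by rw [List.prod_cons]⟩

lemma exists_fst_eq_mul_prod [MetricSpace W] (hW : IsWordDist W (wreathGens SL SQ e))
    (w w' : W) (y : Q) :
    ∃ m : List L, (m.length : ℝ) ≤ dist w w' ∧ (∀ a ∈ m, a ∈ SL ∨ a⁻¹ ∈ SL) ∧
      (e w').1.1 y = (e w).1.1 y * m.prod := by
  obtain ⟨l, hl, rfl, hlen⟩ := hW.exists_list w w'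
  obtain ⟨m, hm, hmS, hwm⟩ := he.exists_fst_mul_prod hl w y
  exact ⟨m, hlen ▸ Nat.cast_le.2 hm, hmS, hwm⟩

/-- Within a ball of radius `t`, two lamp configurations differ at a given point by a word of
length at most `2t` in the generators of `L`. -/
lemma card_image_fst_le [MetricSpace W] (hW : IsWordDist W (wreathGens SL SQ e))
    {g : ℝ → ℝ} (hL : ∀ n : ℕ, ∀ t : Finset L, (∀ l ∈ t, ∃ w : List L, w.length ≤ n ∧
      (∀ x ∈ w, x ∈ SL ∨ x⁻¹ ∈ SL) ∧ w.prod = l) → (t.card : ℝ) ≤ g n)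
    (hg : SubexpFun g) [DecidableEq L] {s : Finset W} {x : W} {t : ℝ}
    (hs : ↑s ⊆ closedBall x t) (y : Q) :
    ((s.image fun w => (e w).1.1 y).card : ℝ) ≤ g (2 * t) := by
  rcases s.eq_empty_or_nonempty with rfl | ⟨w0, hw0⟩
  · simpa using hg.2.1 _
  have ht : 0 ≤ t := dist_nonneg.trans (mem_closedBall.1 (hs hw0))
  have hword : ∀ b ∈ (s.image fun w => (e w).1.1 y).image (((e w0).1.1 y)⁻¹ * ·),
      ∃ m : List L, m.length ≤ ⌊2 * t⌋₊ ∧ (∀ a ∈ m, a ∈ SL ∨ a⁻¹ ∈ SL) ∧ m.prod = b := by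
    simp only [Finset.mem_image]
    rintro _ ⟨_, ⟨w, hw, rfl⟩, rfl⟩
    obtain ⟨m, hm, hmS, hwm⟩ := he.exists_fst_eq_mul_prod hW w0 w y
    have hdist : dist w0 w ≤ 2 * t := by
      linarith [dist_triangle_right w0 w x, mem_closedBall.1 (hs hw0), mem_closedBall.1 (hs hw)]
    exact ⟨m, Nat.le_floor (hm.trans hdist), hmS, by rw [hwm, inv_mul_cancel_left]⟩
  calc ((s.image fun w => (e w).1.1 y).card : ℝ)
      = (((s.image fun w => (e w).1.1 y).image (((e w0).1.1 y)⁻¹ * ·)).card : ℝ) := by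
        rw [Finset.card_image_of_injective _ (mul_right_injective _)]
    _ ≤ g ⌊2 * t⌋₊ := hL _ _ hword
    _ ≤ g (2 * t) := hg.1 (Set.mem_Ici.2 (Nat.cast_nonneg _)) (Set.mem_Ici.2 (by positivity))
        (Nat.floor_le (by positivity))

variable [MetricSpace Q]

lemma dist_snd_mul_letter_le (hQ : IsWordDist Q SQ) (w : W) {σ : W}
    (hσ : σ ∈ wreathGens SL SQ e ∨ σ⁻¹ ∈ wreathGens SL SQ e) :
    dist (e w).2 (e (w * σ)).2 ≤ 1 := by
  rw [he.snd_mul]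
  rcases (he.letter_shape hσ).1 with h | h
  · rw [h, mul_one, dist_self]
    exact zero_le_one
  · simpa using hQ.dist_le_length [(e σ).2] (by simpa using h) (by simp)

lemma dist_snd_mul_prod_le (hQ : IsWordDist Q SQ) {l : List W}
    (hl : ∀ σ ∈ l, σ ∈ wreathGens SL SQ e ∨ σ⁻¹ ∈ wreathGens SL SQ e) (w : W) :
    dist (e w).2 (e (w * l.prod)).2 ≤ l.length := by
  induction l generalizing w with
  | nil => simp
  | cons σ l ih =>
    have hstep := he.dist_snd_mul_letter_le hQ w (hl σ List.mem_cons_self)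
    have hrest := ih (fun τ hτ => hl τ (List.mem_cons_of_mem σ hτ)) (w * σ)
    rw [List.prod_cons, ← mul_assoc, List.length_cons, Nat.cast_succ]
    linarith [dist_triangle (e w).2 (e (w * σ)).2 (e (w * σ * l.prod)).2]

lemma fst_mul_prod_of_length_lt (hQ : IsWordDist Q SQ) {l : List W}
    (hl : ∀ σ ∈ l, σ ∈ wreathGens SL SQ e ∨ σ⁻¹ ∈ wreathGens SL SQ e) (w : W) {y : Q}
    (hy : l.length < dist (e w).2 y) : (e (w * l.prod)).1.1 y = (e w).1.1 y := by
  induction l generalizing w with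
  | nil => simp
  | cons σ l ih =>
    have hσ := hl σ List.mem_cons_self
    have hstep := he.dist_snd_mul_letter_le hQ w hσ
    rw [List.length_cons, Nat.cast_succ] at hy
    have hfar : l.length < dist (e (w * σ)).2 y := by
      linarith [dist_triangle (e w).2 (e (w * σ)).2 y]
    have hne : y ≠ (e w).2 := by
      rintro rfl
      rw [dist_self] at hy
      linarith [(l.length.cast_nonneg : (0 : ℝ) ≤ l.length)]
    rw [List.prod_cons, ← mul_assoc, ih (fun τ hτ => hl τ (List.mem_cons_of_mem σ hτ)) _ hfar,
      he.fst_mul_letter_of_ne w hσ hne]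

variable [MetricSpace W]

lemma dist_snd_le (hQ : IsWordDist Q SQ) (hW : IsWordDist W (wreathGens SL SQ e)) (w w' : W) :
    dist (e w).2 (e w').2 ≤ dist w w' := by
  obtain ⟨l, hl, rfl, hlen⟩ := hW.exists_list w w'
  exact hlen ▸ he.dist_snd_mul_prod_le hQ hl w

lemma fst_eq_of_dist_lt (hQ : IsWordDist Q SQ) (hW : IsWordDist W (wreathGens SL SQ e))
    {w w' : W} {y : Q} (h : dist w w' < dist (e w).2 y) : (e w').1.1 y = (e w).1.1 y := by
  obtain ⟨l, hl, rfl, hlen⟩ := hW.exists_list w w'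
  exact he.fst_mul_prod_of_length_lt hQ hl w (hlen ▸ h)

end IsWreathEquiv

end Wreath

section Pieces

variable {L Q W : Type*} [Group L] [MetricSpace Q]

def wreathPiece (e : W ≃ {φ : Q → L // (Function.mulSupport φ).Finite} × Q) (r : ℝ)
    (V : Set Q) (ψ : Q → L) : Set W :=
  {w : W | (e w).2 ∈ V ∧ ∀ y : Q, (∀ v ∈ V, r ≤ dist y v) → (e w).1.1 y = ψ y}

lemma wreathPiece_injOn {e : W ≃ {φ : Q → L // (Function.mulSupport φ).Finite} × Q} {r : ℝ}
    {V : Set Q} {ψ : Q → L} {F : Finset Q} (hF : ∀ y : Q, ∀ v ∈ V, dist y v < r → y ∈ F) :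
    (wreathPiece e r V ψ).InjOn fun w => ((e w).2, fun y : F => (e w).1.1 y) := by
  intro w hw w' hw' h
  simp only [Prod.mk.injEq] at h
  refine e.injective (Prod.ext (Subtype.ext (funext fun y => ?_)) h.1)
  by_cases hy : y ∈ F
  · exact congrFun h.2 ⟨y, hy⟩
  · have hfar : ∀ v ∈ V, r ≤ dist y v := fun v hv => not_lt.1 fun h => hy (hF y v hv h)
    rw [hw.2 y hfar, hw'.2 y hfar]

variable [Group Q] [Group W] [MetricSpace W]

namespace IsWreathEquiv

variable {e : W ≃ {φ : Q → L // (Function.mulSupport φ).Finite} × Q} (he : IsWreathEquiv e)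
  {SL : Set L}
include he

lemma wreathPiece_eq_of_dist_lt {SQ : Set Q} (hQ : IsWordDist Q SQ)
    (hW : IsWordDist W (wreathGens SL SQ e)) {r : ℝ} {V : Set Q} {ψ ψ' : Q → L}
    {w w' : W} (hw : w ∈ wreathPiece e r V ψ) (hw' : w' ∈ wreathPiece e r V ψ')
    (h : dist w w' < r) : wreathPiece e r V ψ = wreathPiece e r V ψ' := by
  have hψ : ∀ y : Q, (∀ v ∈ V, r ≤ dist y v) → ψ y = ψ' y := fun y hy => by
    have hlt : dist w w' < dist (e w).2 y := h.trans_le (dist_comm y _ ▸ hy _ hw.1)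
    rw [← hw.2 y hy, ← hw'.2 y hy, he.fst_eq_of_dist_lt hQ hW hlt]
  ext u
  exact and_congr_right fun _ => forall_congr' fun y => imp_congr_right fun hy => by
    rw [hψ y hy]

/-- An element of the piece is determined by its position and its lamps on the `(r + B)`-ball
around a point of `V`, a set of at most `(2 |SQ| + 1) ^ ⌈r + B⌉` points; in a ball of radius `t`
each lamp takes at most `g (2t)` values. -/
lemma card_le_of_subset_wreathPiece {SQ : Finset Q} (hQ : IsWordDist Q SQ)
    (hW : IsWordDist W (wreathGens SL SQ e)) {g : ℝ → ℝ}
    (hL : ∀ n : ℕ, ∀ t : Finset L, (∀ l ∈ t, ∃ w : List L, w.length ≤ n ∧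
      (∀ x ∈ w, x ∈ SL ∨ x⁻¹ ∈ SL) ∧ w.prod = l) → (t.card : ℝ) ≤ g n)
    (hg : SubexpFun g) {r B : ℝ} (hr : 0 < r) {V : Set Q}
    (hV : ∀ v ∈ V, ∀ v' ∈ V, dist v v' ≤ B) {ψ : Q → L} {s : Finset W} {x : W} {t : ℝ}
    (hs : ↑s ⊆ wreathPiece e r V ψ ∩ closedBall x t) :
    (s.card : ℝ) ≤ ((2 * SQ.card + 1) ^ ⌈r + B⌉₊ : ℕ) *
      max 1 (g (2 * t)) ^ (2 * SQ.card + 1) ^ ⌈r + B⌉₊ := by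
  classical
  set M := (2 * SQ.card + 1) ^ ⌈r + B⌉₊
  set G := max 1 (g (2 * t))
  rcases s.eq_empty_or_nonempty with rfl | ⟨w0, hw0⟩
  · simp only [Finset.card_empty, Nat.cast_zero]
    positivity
  obtain ⟨F, hF, hFcard⟩ := hQ.exists_finset_closedBall_subset (e w0).2 ⌈r + B⌉₊
  have hnear : ∀ y : Q, ∀ v ∈ V, dist y v < r → y ∈ F := fun y v hv hyv => hF <|
    mem_closedBall.2 <| by
      linarith [dist_triangle y v (e w0).2, hV v hv _ (hs hw0).1.1, Nat.le_ceil (r + B)]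
  have hmaps : Set.MapsTo (fun w => ((e w).2, fun y : F => (e w).1.1 y)) s
      (F ×ˢ Fintype.piFinset fun y : F => s.image fun w => (e w).1.1 y : Finset _) := fun w hw =>
    Finset.mem_coe.2 <| Finset.mem_product.2 ⟨hnear (e w).2 (e w).2 (hs hw).1.1
      (by rwa [dist_self]), Fintype.mem_piFinset.2 fun y => Finset.mem_image_of_mem _ hw⟩
  have hinj := (wreathPiece_injOn (ψ := ψ) hnear).mono (hs.trans inter_subset_left)
  calc (s.card : ℝ)
      ≤ ((F ×ˢ Fintype.piFinset fun y : F => s.image fun w => (e w).1.1 y).card : ℝ) := by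
        exact_mod_cast Finset.card_le_card_of_injOn _ hmaps hinj
    _ = F.card * ∏ y : F, ((s.image fun w => (e w).1.1 y).card : ℝ) := by
        rw [Finset.card_product, Fintype.card_piFinset]
        push_cast
        rfl
    _ ≤ M * ∏ _y : F, G := by
        have hc : ∀ y : Q, ((s.image fun w => (e w).1.1 y).card : ℝ) ≤ G := fun y =>
          (he.card_image_fst_le hW hL hg (hs.trans inter_subset_right) y).trans (le_max_right _ _)
        gcongr with y
        exact hc y
    _ ≤ M * G ^ M := by
        rw [Finset.prod_const, Finset.card_univ, Fintype.card_coe]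
        gcongr
        exact le_max_left _ _

end IsWreathEquiv

end Pieces

theorem asdim_se_wreath_le_asdim_general
    (L Q W : Type*) [Group L] [Group Q] [Group W] [MetricSpace W] [MetricSpace Q]
    (SL : Finset L)
    (SQ : Finset Q)
    (hQdist : IsWordDist Q (SQ : Set Q))
    (hLgrowth : ∃ g : ℝ → ℝ, SubexpFun g ∧ ∀ n : ℕ, ∀ t : Finset L,
      (∀ l ∈ t, ∃ w : List L, w.length ≤ n ∧ (∀ x ∈ w, x ∈ SL ∨ x⁻¹ ∈ SL) ∧ w.prod = l) →
      (t.card : ℝ) ≤ g n)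
    (e : W ≃ {φ : Q → L // (Function.mulSupport φ).Finite} × Q)
    (hmul : ∀ w w' : W,
      ((e (w * w')).1.1 = fun x : Q => (e w).1.1 x * (e w').1.1 ((e w).2⁻¹ * x)) ∧
      (e (w * w')).2 = (e w).2 * (e w').2)
    (SW : Set W)
    (hSW : SW = {w : W | ((∀ x : Q, (e w).1.1 x = 1) ∧ (e w).2 ∈ SQ) ∨
      ((e w).2 = 1 ∧ (e w).1.1 1 ∈ SL ∧ ∀ x : Q, x ≠ 1 → (e w).1.1 x = 1)})
    (hWdist : IsWordDist W SW)
    (n : ℕ) (hQdim : ClassicalAsdimLE Q n) :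
    AsdimLE seFamily W n := by
  subst hSW
  have he : IsWreathEquiv e := hmul
  obtain ⟨g, hg, hgrowth⟩ := hLgrowth
  intro r hr
  obtain ⟨𝒱, ⟨hcover, hsep⟩, B, hB⟩ := hQdim r hr
  set M := (2 * SQ.card + 1) ^ ⌈r + B⌉₊
  have hM : (1 : ℝ) ≤ M := by exact_mod_cast Nat.one_le_pow _ _ (by omega)
  have hf := hg.max_one.pow M
  refine ⟨fun i => {U | ∃ V ∈ 𝒱 i, ∃ ψ : Q → L, U = wreathPiece e r V ψ}, ⟨?_, ?_⟩,
    fun t => max 1 (g t) ^ M, hf, 2 * M, by linarith, ?_⟩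
  · intro w
    obtain ⟨i, V, hV, hw⟩ := hcover (e w).2
    exact ⟨i, _, ⟨V, hV, (e w).1.1, rfl⟩, hw, fun _ _ => rfl⟩
  · rintro i _ ⟨V, hV, ψ, rfl⟩ _ ⟨V', hV', ψ', rfl⟩ hne w hw w' hw'
    by_contra! hlt
    obtain rfl : V = V' := by
      by_contra hVV
      linarith [hsep i V hV V' hV' hVV _ hw.1 _ hw'.1, he.dist_snd_le hQdist hWdist w w']
    exact hne (he.wreathPiece_eq_of_dist_lt hQdist hWdist hw hw' hlt)
  · rintro U hU x t ht s hs
    obtain ⟨i, V, hV, ψ, rfl⟩ := mem_iUnion.1 hU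
    have hcard := he.card_le_of_subset_wreathPiece hQdist hWdist hgrowth hg hr
      (hB _ (mem_iUnion.2 ⟨i, hV⟩)) hs
    have hmono : max 1 (g (2 * t)) ^ M ≤ max 1 (g (2 * M * t)) ^ M :=
      hf.1 (mem_Ici.2 (by positivity)) (mem_Ici.2 (by positivity)) (by nlinarith)
    have hpos : 0 ≤ max 1 (g (2 * t)) ^ M := hf.2.1 _
    nlinarith

/-- If `L` is a finitely generated group of subexponential growth and `Q`
is a finitely generated group of finite asymptotic dimension, then the restricted wreath
product `W = L ≀ Q` (whose elements are pairs `(φ, q)` with `φ : Q → L` finitely supported,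
with multiplication `(φ, q)(φ', q') = (φ · (q·φ'), q q')`, and with the word metric of the
generating set consisting of the generators of `Q` together with the functions supported at
the identity of `Q` with a generator of `L` as value) satisfies
`asdim_se(L ≀ Q) ≤ asdim(Q)`. -/
theorem asdim_se_wreath_le_asdim
    (L Q W : Type*) [Group L] [Group Q] [Group W] [MetricSpace W] [MetricSpace Q]
    (SL : Finset L) (hSLgen : Subgroup.closure (SL : Set L) = ⊤)
    (SQ : Finset Q) (hSQgen : Subgroup.closure (SQ : Set Q) = ⊤)
    (hQdist : IsWordDist Q (SQ : Set Q))
    (hLgrowth : ∃ g : ℝ → ℝ, SubexpFun g ∧ ∀ n : ℕ, ∀ t : Finset L,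
      (∀ l ∈ t, ∃ w : List L, w.length ≤ n ∧ (∀ x ∈ w, x ∈ SL ∨ x⁻¹ ∈ SL) ∧ w.prod = l) →
      (t.card : ℝ) ≤ g n)
    (hQfin : ∃ n : ℕ, ClassicalAsdimLE Q n)
    (e : W ≃ {φ : Q → L // (Function.mulSupport φ).Finite} × Q)
    (hmul : ∀ w w' : W,
      ((e (w * w')).1.1 = fun x : Q => (e w).1.1 x * (e w').1.1 ((e w).2⁻¹ * x)) ∧
      (e (w * w')).2 = (e w).2 * (e w').2)
    (SW : Set W)
    (hSW : SW = {w : W | ((∀ x : Q, (e w).1.1 x = 1) ∧ (e w).2 ∈ SQ) ∨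
      ((e w).2 = 1 ∧ (e w).1.1 1 ∈ SL ∧ ∀ x : Q, x ≠ 1 → (e w).1.1 x = 1)})
    (hWgen : Subgroup.closure SW = ⊤)
    (hWdist : IsWordDist W SW)
    (n : ℕ) (hQdim : ClassicalAsdimLE Q n) :
    AsdimLE seFamily W n :=
  asdim_se_wreath_le_asdim_general L Q W SL SQ hQdist hLgrowth e hmul SW hSW hWdist n hQdim
end
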